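/- Under Assumption 1, let p₀ = δ_M. Then: (i) for each fixed x ∈ 𝓜, the sequence i ↦ s(x,p_i) is nondecreasing and s(x,p*) ≥ sup_{i≥0} s(x,p_i); (ii) p* satisfies p*(dx) = (1−β)·(sup_{i≥0} s(x,p_i))·p*(dx) + β q(dx); (iii) p* ≺ (1−β) s(x,p*) p*(dx) + β q(dx), i.e. the measure (1−β) s(x,p*) p*(dx) + β q(dx) − p*(dx) is nonnegative; (iv) if moreover u ↦ w(x,u) is continuous on P(𝓜) in the total variation norm for each x ∈ 𝓜, then the relation in (iii) is an equality of measures. -/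

import Mathlib

open MeasureTheory Set Filter

/-- Selective advantage `s(x,u) = w(x,u) / ∫ w(y,u) u(dy)` if the mean fitness is
positive, and `1` otherwise. -/
noncomputable def sel (w : ℝ → MeasureTheory.Measure ℝ → ℝ)
    (u : MeasureTheory.Measure ℝ) (x : ℝ) : ℝ :=
  if 0 < ∫ y, w y u ∂u then w x u / ∫ y, w y u ∂u else 1

/-- The sequence of type distributions:
`p_i(dx) = (1-β) s(x,p_{i-1}) p_{i-1}(dx) + β q(dx)`. -/
noncomputable def evol (w : ℝ → MeasureTheory.Measure ℝ → ℝ) (β : ℝ)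
    (q p₀ : MeasureTheory.Measure ℝ) : ℕ → MeasureTheory.Measure ℝ
  | 0 => p₀
  | i + 1 =>
      ENNReal.ofReal (1 - β) •
          ((evol w β q p₀ i).withDensity fun x =>
            ENNReal.ofReal (sel w (evol w β q p₀ i) x))
        + ENNReal.ofReal β • q

/-- Convergence in total variation (uniform convergence over all measurable sets). -/
def TendstoTV (p : ℕ → MeasureTheory.Measure ℝ) (μ : MeasureTheory.Measure ℝ) : Prop :=
  ∀ ε : ℝ, 0 < ε → ∃ N : ℕ, ∀ i ≥ N, ∀ A : Set ℝ, MeasurableSet A →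
    |((p i) A).toReal - (μ A).toReal| < ε

/-- Weak convergence of measures (tested against bounded continuous functions). -/
def TendstoWeak (p : ℕ → MeasureTheory.Measure ℝ) (μ : MeasureTheory.Measure ℝ) : Prop :=
  ∀ f : BoundedContinuousFunction ℝ ℝ,
    Filter.Tendsto (fun i => ∫ x, f x ∂(p i)) Filter.atTop (nhds (∫ x, f x ∂μ))

/-- Assumption 1: if `v` restricted to `[0,M)` is a component of `u` restricted to `[0,M)`,
then `s(·,u) ≥ s(·,v)` on `[0,M]`. -/
def Assumption1 (M : ℝ) (w : ℝ → MeasureTheory.Measure ℝ → ℝ) : Prop :=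
  ∀ u v : MeasureTheory.Measure ℝ,
    IsProbabilityMeasure u → IsProbabilityMeasure v →
    u ((Set.Icc 0 M)ᶜ) = 0 → v ((Set.Icc 0 M)ᶜ) = 0 →
    v.restrict (Set.Ico 0 M) ≤ u.restrict (Set.Ico 0 M) →
    ∀ x ∈ Set.Icc (0:ℝ) M, sel w v x ≤ sel w u x

/-- Assumption 2: for every `0 ≤ a < M` and `0 < ε < 1` there is `c(a,ε) > 1` such that
`s(M,u) ≥ c(a,ε) s(M,v)` whenever `v_{[0,M)} ≺ u_{[0,M)}` and `D_u(a) ≥ D_v(a) + ε`. -/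
def Assumption2 (M : ℝ) (w : ℝ → MeasureTheory.Measure ℝ → ℝ) : Prop :=
  ∀ a : ℝ, 0 ≤ a → a < M → ∀ ε : ℝ, 0 < ε → ε < 1 → ∃ c : ℝ, 1 < c ∧
    ∀ u v : MeasureTheory.Measure ℝ,
      IsProbabilityMeasure u → IsProbabilityMeasure v →
      u ((Set.Icc 0 M)ᶜ) = 0 → v ((Set.Icc 0 M)ᶜ) = 0 →
      v.restrict (Set.Ico 0 M) ≤ u.restrict (Set.Ico 0 M) →
      (v (Set.Icc 0 a)).toReal + ε ≤ (u (Set.Icc 0 a)).toReal →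
      c * sel w v M ≤ sel w u M

/-! Starting from `δ_M`, Assumption 1 propagates along the recursion: if `p_{i-1} ≤ p_i` on
`[0,M)` then `s(·,p_{i-1}) ≤ s(·,p_i)` on `[0,M]`, hence `p_i ≤ p_{i+1}` on `[0,M)`. So the
restrictions of the `p_i` to `[0,M)` increase to that of `p*`, which yields (i). For (ii) one
passes to the limit in the recursion: on `[0,M)` both the measures and the densities increase
(monotone convergence), while the atom at `M`, whose mass decreases, converges on its own.
The right-hand side of (iii) is the image of `p*` under one step of the recursion, again a
probability measure, and a probability measure dominated by another one equals it. -/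

open MeasureTheory Set Filter Topology ENNReal

def TendstoSetwise {α : Type*} [MeasurableSpace α] (μ : ℕ → Measure α) (ν : Measure α) :
    Prop :=
  ∀ s, MeasurableSet s → Tendsto (fun i => μ i s) atTop (𝓝 (ν s))

namespace TendstoSetwise

variable {α : Type*} [MeasurableSpace α] {μ : ℕ → Measure α} {ν : Measure α}

lemma restrict (h : TendstoSetwise μ ν) {S : Set α} (hS : MeasurableSet S) :
    TendstoSetwise (fun i => (μ i).restrict S) (ν.restrict S) := fun s hs => by
  simpa only [Measure.restrict_apply hs] using h _ (hs.inter hS)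

lemma apply_eq_zero (h : TendstoSetwise μ ν) {s : Set α} (hs : MeasurableSet s)
    (h0 : ∀ i, μ i s = 0) : ν s = 0 :=
  tendsto_nhds_unique (h s hs) (by simp only [h0, tendsto_const_nhds])

lemma iSup_apply (h : TendstoSetwise μ ν) (hμ : Monotone μ) {s : Set α} (hs : MeasurableSet s) :
    ⨆ i, μ i s = ν s :=
  tendsto_nhds_unique (tendsto_atTop_iSup fun _ _ hij => hμ hij s) (h s hs)

lemma le (h : TendstoSetwise μ ν) (hμ : Monotone μ) (i : ℕ) : μ i ≤ ν :=
  Measure.le_iff.mpr fun s hs => h.iSup_apply hμ hs ▸ le_iSup (fun j => μ j s) i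

lemma lintegral_eq_iSup (h : TendstoSetwise μ ν) (hμ : Monotone μ) {f : α → ℝ≥0∞}
    (hf : Measurable f) : ∫⁻ x, f x ∂ν = ⨆ i, ∫⁻ x, f x ∂μ i := by
  have hsimple (φ : SimpleFunc α ℝ≥0∞) : φ.lintegral ν = ⨆ i, φ.lintegral (μ i) := by
    simp only [SimpleFunc.lintegral, ← h.iSup_apply hμ (φ.measurableSet_fiber _),
      ENNReal.mul_iSup]
    exact (ENNReal.finsetSum_iSup_of_monotone (f := fun a i => a * μ i (φ ⁻¹' {a}))
      fun a _ _ hij => mul_le_mul_right (hμ hij _) a)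
  simp only [lintegral_eq_iSup_eapprox_lintegral hf, hsimple]
  exact iSup_comm

lemma tendsto_lintegral (h : TendstoSetwise μ ν) (hμ : Monotone μ) {f : ℕ → α → ℝ≥0∞}
    (hf : ∀ i, Measurable (f i)) (hf_mono : ∀ᵐ x ∂ν, Monotone fun n => f n x) :
    Tendsto (fun i => ∫⁻ x, f i x ∂μ i) atTop (𝓝 (∫⁻ x, ⨆ i, f i x ∂ν)) := by
  have hf_mono' (i : ℕ) : ∀ᵐ x ∂μ i, Monotone fun n => f n x :=
    (Measure.absolutelyContinuous_of_le (h.le hμ i)).ae_le hf_mono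
  have hseq : Monotone fun i => ∫⁻ x, f i x ∂μ i := fun i j hij =>
    (lintegral_mono' (hμ hij) le_rfl).trans
      (lintegral_mono_ae ((hf_mono' j).mono fun x hx => hx hij))
  convert tendsto_atTop_iSup hseq using 2
  refine le_antisymm ?_ <|
    iSup_le fun i => lintegral_mono' (h.le hμ i) fun x => le_iSup (fun j => f j x) i
  rw [lintegral_iSup' (fun i => (hf i).aemeasurable) hf_mono]
  refine iSup_le fun i => (h.lintegral_eq_iSup hμ (hf i)).trans_le (iSup_le fun j => ?_)
  calc ∫⁻ x, f i x ∂μ j ≤ ∫⁻ x, f (max i j) x ∂μ (max i j) :=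
        (lintegral_mono' (hμ (le_max_right i j)) le_rfl).trans
          (lintegral_mono_ae ((hf_mono' _).mono fun x hx => hx (le_max_left i j)))
    _ ≤ _ := le_iSup (fun k => ∫⁻ x, f k x ∂μ k) _

end TendstoSetwise

lemma TendstoTV.tendstoSetwise {p : ℕ → Measure ℝ} {μ : Measure ℝ} (h : TendstoTV p μ)
    (hp : ∀ i, IsFiniteMeasure (p i)) [IsFiniteMeasure μ] : TendstoSetwise p μ := fun A hA =>
  (ENNReal.tendsto_toReal_iff (fun _ => measure_ne_top _ _) (measure_ne_top _ _)).mp <|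
    Metric.tendsto_atTop.mpr fun ε hε => (h ε hε).imp fun _ hN i hi => hN i hi A hA

section Atom

variable {α : Type*} [MeasurableSpace α] {S : Set α} {b : α} {μ : Measure α}

lemma MeasureTheory.Measure.eq_restrict_add_dirac (hS : MeasurableSet S) (hb : b ∉ S)
    (hμ : μ (insert b S)ᶜ = 0) : μ = μ.restrict S + μ {b} • Measure.dirac b := by
  conv_lhs => rw [← Measure.restrict_eq_self_of_ae_mem (s := {b} ∪ S) (mem_ae_iff.mpr hμ)]
  rw [Measure.restrict_union (disjoint_singleton_left.mpr hb) hS,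
    Measure.restrict_singleton, add_comm]

lemma withDensity_eq_restrict_add_dirac [MeasurableSingletonClass α] (hS : MeasurableSet S)
    (hb : b ∉ S) (hμ : μ (insert b S)ᶜ = 0) (f : α → ℝ≥0∞) :
    μ.withDensity f = (μ.restrict S).withDensity f + (f b * μ {b}) • Measure.dirac b := by
  conv_lhs => rw [μ.eq_restrict_add_dirac hS hb hμ]
  rw [withDensity_add_measure, withDensity_smul_measure, dirac_withDensity, smul_smul,
    mul_comm]

end Atom

lemma ENNReal.ofReal_iSup_of_bddAbove {ι : Sort*} [Nonempty ι] {g : ι → ℝ}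
    (hg : BddAbove (range g)) : ENNReal.ofReal (⨆ i, g i) = ⨆ i, ENNReal.ofReal (g i) :=
  Monotone.map_ciSup_of_continuousAt ENNReal.continuous_ofReal.continuousAt
    ENNReal.ofReal_mono hg

lemma withDensity_mono_measure {α : Type*} [MeasurableSpace α] {μ ν : Measure α} (h : μ ≤ ν)
    (f : α → ℝ≥0∞) : μ.withDensity f ≤ ν.withDensity f :=
  Measure.le_iff.mpr fun s hs => by
    simp only [withDensity_apply _ hs]
    exact lintegral_mono' (Measure.restrict_mono subset_rfl h) le_rfl

theorem eq_smul_withDensity_iSup_add_of_tendstoSetwise {α : Type*} [MeasurableSpace α]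
    [MeasurableSingletonClass α] {S : Set α} {b : α} {p : ℕ → Measure α} {π q : Measure α}
    [IsFiniteMeasure π] {f : ℕ → α → ℝ≥0∞} {c d : ℝ≥0∞} (hc : c ≠ ∞)
    (hS : MeasurableSet S) (hb : b ∉ S)
    (hp : ∀ i, p (i + 1) = c • (p i).withDensity (f i) + d • q) (hlim : TendstoSetwise p π)
    (hsupp : ∀ i, p i (insert b S)ᶜ = 0) (hπ : π (insert b S)ᶜ = 0)
    (hmono : Monotone fun i => (p i).restrict S) (hf : ∀ i, Measurable (f i))
    (hf_mono : ∀ x ∈ insert b S, Monotone fun i => f i x) (hfb : ⨆ i, f i b ≠ ∞) :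
    π = c • π.withDensity (fun x => ⨆ i, f i x) + d • q := by
  ext A hA
  have hint : Tendsto (fun i => ((p i).restrict S).withDensity (f i) A) atTop
      (𝓝 ((π.restrict S).withDensity (fun x => ⨆ i, f i x) A)) := by
    simp only [withDensity_apply _ hA]
    refine ((hlim.restrict hS).restrict hA).tendsto_lintegral
      (fun i j hij => Measure.restrict_mono subset_rfl (hmono hij)) hf ?_
    exact ae_restrict_of_ae
      (ae_restrict_of_forall_mem hS fun x hx => hf_mono x (mem_insert_of_mem b hx))
  have hatom : Tendsto (fun i => f i b * p i {b}) atTop (𝓝 ((⨆ i, f i b) * π {b})) :=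
    ENNReal.Tendsto.mul (tendsto_atTop_iSup (hf_mono b (mem_insert b S)))
      (Or.inr (measure_ne_top _ _)) (hlim _ (measurableSet_singleton b)) (Or.inr hfb)
  have hstep : Tendsto (fun i => p (i + 1) A) atTop
      (𝓝 ((c • π.withDensity (fun x => ⨆ i, f i x) + d • q) A)) := by
    simp only [hp, withDensity_eq_restrict_add_dirac hS hb (hsupp _),
      withDensity_eq_restrict_add_dirac hS hb hπ, Measure.add_apply, Measure.smul_apply,
      smul_eq_mul]
    have hsum := hint.add
      (ENNReal.Tendsto.mul_const hatom (Or.inr (measure_ne_top (Measure.dirac b) A)))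
    exact (ENNReal.Tendsto.const_mul hsum (Or.inr hc)).add_const _
  exact tendsto_nhds_unique ((hlim A hA).comp (tendsto_add_atTop_nat 1)) hstep

section Evolution

variable {M : ℝ} {w : ℝ → Measure ℝ → ℝ} {β : ℝ} {q p₀ : Measure ℝ}

lemma measurable_sel (hw : ∀ u, Measurable fun x => w x u) (u : Measure ℝ) :
    Measurable (sel w u) := by
  unfold sel
  split_ifs
  exacts [(hw u).div_const _, measurable_const]

lemma lintegral_ofReal_sel (hw : ∀ x u, 0 ≤ w x u) (u : Measure ℝ) [IsProbabilityMeasure u] :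
    ∫⁻ x, ENNReal.ofReal (sel w u x) ∂u = 1 := by
  by_cases h : 0 < ∫ y, w y u ∂u
  · have hint : Integrable (fun y => w y u) u := Integrable.of_integral_ne_zero h.ne'
    simp only [sel, if_pos h]
    rw [← ofReal_integral_eq_lintegral_ofReal (hint.div_const _)
      (ae_of_all _ fun x => div_nonneg (hw x u) h.le), integral_div, div_self h.ne',
      ENNReal.ofReal_one]
  · simp [sel, h]

lemma evol_zero : evol w β q p₀ 0 = p₀ :=
  rfl

lemma evol_succ (i : ℕ) : evol w β q p₀ (i + 1) = ENNReal.ofReal (1 - β) •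
    (evol w β q p₀ i).withDensity (fun x => ENNReal.ofReal (sel w (evol w β q p₀ i) x))
      + ENNReal.ofReal β • q :=
  rfl

lemma isProbabilityMeasure_evol (hw : ∀ x u, 0 ≤ w x u) (hβ : β ∈ Icc 0 1)
    [IsProbabilityMeasure q] [IsProbabilityMeasure p₀] :
    ∀ i, IsProbabilityMeasure (evol w β q p₀ i)
  | 0 => ‹_›
  | i + 1 => by
    have := isProbabilityMeasure_evol hw hβ i
    constructor
    rw [evol_succ, Measure.add_apply, Measure.smul_apply, Measure.smul_apply,
      withDensity_apply _ MeasurableSet.univ, Measure.restrict_univ, lintegral_ofReal_sel hw,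
      measure_univ, smul_eq_mul, smul_eq_mul, mul_one, mul_one,
      ← ENNReal.ofReal_add (by linarith [hβ.2]) hβ.1]
    norm_num

lemma evol_apply_eq_zero {S : Set ℝ} (hS : MeasurableSet S) (hp₀ : p₀ S = 0) (hq : q S = 0) :
    ∀ i, evol w β q p₀ i S = 0
  | 0 => hp₀
  | i + 1 => by
    simp [evol_succ, withDensity_apply _ hS,
      setLIntegral_measure_zero _ _ (evol_apply_eq_zero hS hp₀ hq i), hq]

lemma restrict_evol_succ {S : Set ℝ} (hS : MeasurableSet S) (i : ℕ) :
    (evol w β q p₀ (i + 1)).restrict S = ENNReal.ofReal (1 - β) •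
      ((evol w β q p₀ i).restrict S).withDensity
        (fun x => ENNReal.ofReal (sel w (evol w β q p₀ i) x))
      + ENNReal.ofReal β • q.restrict S := by
  rw [evol_succ, Measure.restrict_add, Measure.restrict_smul, Measure.restrict_smul,
    restrict_withDensity hS]

lemma eq_smul_withDensity_iSup_sel_add {π : Measure ℝ} [IsFiniteMeasure π]
    (hM : 0 ≤ M) (hw : ∀ u, Measurable fun x => w x u)
    (hlim : TendstoSetwise (evol w β q p₀) π) (hsupp : ∀ i, evol w β q p₀ i (Icc 0 M)ᶜ = 0)
    (hπ : π (Icc 0 M)ᶜ = 0) (hmono : Monotone fun i => (evol w β q p₀ i).restrict (Ico 0 M))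
    (hsel_mono : ∀ x ∈ Icc 0 M, Monotone fun i => sel w (evol w β q p₀ i) x)
    (hsel_bdd : ∀ x ∈ Icc 0 M, BddAbove (range fun i => sel w (evol w β q p₀ i) x)) :
    π = ENNReal.ofReal (1 - β) •
      π.withDensity (fun x => ENNReal.ofReal (⨆ i, sel w (evol w β q p₀ i) x))
        + ENNReal.ofReal β • q := by
  rw [← Ico_insert_right hM] at hsupp hπ hsel_mono
  have hπ_ae : ∀ᵐ x ∂π, x ∈ insert M (Ico 0 M) := mem_ae_iff.mpr hπ
  have hofReal_iSup : (fun x => ⨆ i, ENNReal.ofReal (sel w (evol w β q p₀ i) x)) =ᵐ[π]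
      fun x => ENNReal.ofReal (⨆ i, sel w (evol w β q p₀ i) x) :=
    hπ_ae.mono fun x hx =>
      (ENNReal.ofReal_iSup_of_bddAbove (hsel_bdd x (Ico_insert_right hM ▸ hx))).symm
  rw [← withDensity_congr_ae hofReal_iSup]
  refine eq_smul_withDensity_iSup_add_of_tendstoSetwise ofReal_ne_top measurableSet_Ico
    (by simp) evol_succ hlim hsupp hπ hmono (fun i => (measurable_sel hw _).ennreal_ofReal)
    (fun x hx i j hij => ENNReal.ofReal_le_ofReal (hsel_mono x hx hij)) ?_
  rw [← ENNReal.ofReal_iSup_of_bddAbove (hsel_bdd M ⟨hM, le_rfl⟩)]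
  exact ofReal_ne_top

lemma sel_evol_le_of_restrict_le (hA1 : Assumption1 M w) (hw : ∀ x u, 0 ≤ w x u)
    (hβ : β ∈ Icc 0 1) [IsProbabilityMeasure q] (hq : q (Icc 0 M)ᶜ = 0)
    [IsProbabilityMeasure p₀] (hp₀ : p₀ (Icc 0 M)ᶜ = 0) {i : ℕ} {u : Measure ℝ}
    [IsProbabilityMeasure u] (hu : u (Icc 0 M)ᶜ = 0)
    (h : (evol w β q p₀ i).restrict (Ico 0 M) ≤ u.restrict (Ico 0 M)) {x : ℝ}
    (hx : x ∈ Icc 0 M) : sel w (evol w β q p₀ i) x ≤ sel w u x :=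
  hA1 _ _ ‹_› (isProbabilityMeasure_evol hw hβ i) hu
    (evol_apply_eq_zero measurableSet_Icc.compl hp₀ hq i) h x hx

lemma monotone_restrict_evol (hA1 : Assumption1 M w) (hw : ∀ x u, 0 ≤ w x u)
    (hβ : β ∈ Icc 0 1) [IsProbabilityMeasure q] (hq : q (Icc 0 M)ᶜ = 0)
    [IsProbabilityMeasure p₀] (hp₀ : p₀ (Icc 0 M)ᶜ = 0)
    (h01 : p₀.restrict (Ico 0 M) ≤ (evol w β q p₀ 1).restrict (Ico 0 M)) :
    Monotone fun i => (evol w β q p₀ i).restrict (Ico 0 M) := by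
  refine monotone_nat_of_le_succ fun i => ?_
  induction i with
  | zero => exact h01
  | succ i ih =>
    have := isProbabilityMeasure_evol hw hβ (p₀ := p₀) (q := q) (w := w) (i + 1)
    have hsel : ∀ x ∈ Icc 0 M, sel w (evol w β q p₀ i) x ≤ sel w (evol w β q p₀ (i + 1)) x :=
      fun x hx => sel_evol_le_of_restrict_le hA1 hw hβ hq hp₀
        (evol_apply_eq_zero measurableSet_Icc.compl hp₀ hq _) ih hx
    rw [restrict_evol_succ measurableSet_Ico, restrict_evol_succ measurableSet_Ico]
    gcongr
    calc _ ≤ ((evol w β q p₀ (i + 1)).restrict (Ico 0 M)).withDensity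
          (fun x => ENNReal.ofReal (sel w (evol w β q p₀ i) x)) := withDensity_mono_measure ih _
      _ ≤ _ := withDensity_mono <| ae_restrict_of_forall_mem measurableSet_Ico fun x hx =>
          ENNReal.ofReal_le_ofReal (hsel x (Ico_subset_Icc_self hx))

end Evolution

/-- Corollary "limit=" of the paper. Under Assumption 1, with `p₀ = δ_M`:
(i) `i ↦ s(x,p_i)` is nondecreasing and `s(x,p*) ≥ ⨆ i, s(x,p_i)` for each `x ∈ [0,M]`;
(ii) `p*(dx) = (1-β)(⨆ i, s(x,p_i)) p*(dx) + β q(dx)`;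
(iii) `p* ≺ (1-β) s(x,p*) p*(dx) + β q(dx)`;
(iv) if moreover `u ↦ w(x,u)` is continuous in total variation on `P([0,M])` for each
`x ∈ [0,M]`, then (iii) is an equality of measures. -/
theorem stmt10 (M : ℝ) (hM : 0 < M) (β : ℝ) (hβ : β ∈ Set.Ioo (0:ℝ) 1)
    (q : MeasureTheory.Measure ℝ) [IsProbabilityMeasure q] (hq : q ((Set.Icc 0 M)ᶜ) = 0)
    (w : ℝ → MeasureTheory.Measure ℝ → ℝ)
    (hw_nonneg : ∀ x u, 0 ≤ w x u)
    (hw_meas : ∀ u, Measurable fun x => w x u)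
    (hA1 : Assumption1 M w)
    (pstar : MeasureTheory.Measure ℝ) [IsProbabilityMeasure pstar]
    (hpstar : TendstoTV (evol w β q (MeasureTheory.Measure.dirac M)) pstar) :
    (∀ x ∈ Set.Icc (0:ℝ) M,
      Monotone (fun i => sel w (evol w β q (MeasureTheory.Measure.dirac M) i) x) ∧
      (⨆ i : ℕ, sel w (evol w β q (MeasureTheory.Measure.dirac M) i) x) ≤ sel w pstar x) ∧
    (pstar = ENNReal.ofReal (1 - β) •
        (pstar.withDensity fun x =>
          ENNReal.ofReal (⨆ i : ℕ, sel w (evol w β q (MeasureTheory.Measure.dirac M) i) x))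
      + ENNReal.ofReal β • q) ∧
    (pstar ≤ ENNReal.ofReal (1 - β) •
        (pstar.withDensity fun x => ENNReal.ofReal (sel w pstar x))
      + ENNReal.ofReal β • q) ∧
    ((∀ x ∈ Set.Icc (0:ℝ) M, ∀ u : MeasureTheory.Measure ℝ,
        IsProbabilityMeasure u → u ((Set.Icc 0 M)ᶜ) = 0 →
        ∀ ε : ℝ, 0 < ε → ∃ δ : ℝ, 0 < δ ∧
          ∀ v : MeasureTheory.Measure ℝ, IsProbabilityMeasure v →
            v ((Set.Icc 0 M)ᶜ) = 0 →
            (∀ A : Set ℝ, MeasurableSet A → |(u A).toReal - (v A).toReal| < δ) →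
            |w x u - w x v| < ε) →
      pstar = ENNReal.ofReal (1 - β) •
          (pstar.withDensity fun x => ENNReal.ofReal (sel w pstar x))
        + ENNReal.ofReal β • q) := by
  have hβ' : β ∈ Icc 0 1 := Ioo_subset_Icc_self hβ
  have hp₀ : Measure.dirac M (Icc 0 M)ᶜ = 0 := by simp [hM.le]
  set p := evol w β q (Measure.dirac M)
  have hprob : ∀ i, IsProbabilityMeasure (p i) := isProbabilityMeasure_evol hw_nonneg hβ'
  have hsupp : ∀ i, p i (Icc 0 M)ᶜ = 0 := evol_apply_eq_zero measurableSet_Icc.compl hp₀ hq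
  have hlim : TendstoSetwise p pstar := hpstar.tendstoSetwise fun _ => inferInstance
  have hpsupp : pstar (Icc 0 M)ᶜ = 0 := hlim.apply_eq_zero measurableSet_Icc.compl hsupp
  have hmono : Monotone fun i => (p i).restrict (Ico 0 M) :=
    monotone_restrict_evol hA1 hw_nonneg hβ' hq hp₀
      ((Measure.restrict_eq_zero.mpr (by simp)).trans_le (Measure.zero_le _))
  have hsel_mono (x : ℝ) (hx : x ∈ Icc 0 M) : Monotone fun i => sel w (p i) x :=
    fun i j hij => sel_evol_le_of_restrict_le hA1 hw_nonneg hβ' hq hp₀ (hsupp j) (hmono hij) hx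
  have hsel_le (x : ℝ) (hx : x ∈ Icc 0 M) (i : ℕ) : sel w (p i) x ≤ sel w pstar x :=
    sel_evol_le_of_restrict_le hA1 hw_nonneg hβ' hq hp₀ hpsupp
      ((hlim.restrict measurableSet_Ico).le hmono i) hx
  have hsup_le (x : ℝ) (hx : x ∈ Icc 0 M) : ⨆ i, sel w (p i) x ≤ sel w pstar x :=
    ciSup_le (hsel_le x hx)
  have hii := eq_smul_withDensity_iSup_sel_add hM.le hw_meas hlim hsupp hpsupp hmono hsel_mono
    (fun x hx => ⟨_, forall_mem_range.2 (hsel_le x hx)⟩)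
  have hdens : (fun x => ENNReal.ofReal (⨆ i, sel w (p i) x)) ≤ᵐ[pstar]
      fun x => ENNReal.ofReal (sel w pstar x) :=
    Filter.Eventually.mono (mem_ae_iff.mpr hpsupp : ∀ᵐ x ∂pstar, x ∈ Icc 0 M) fun x hx =>
      ENNReal.ofReal_le_ofReal (hsup_le x hx)
  have hiii : pstar ≤ evol w β q pstar 1 := hii.trans_le <| by
    rw [evol_succ, evol_zero]
    gcongr
    exact withDensity_mono hdens
  have := isProbabilityMeasure_evol hw_nonneg hβ' (w := w) (q := q) (p₀ := pstar) 1
  exact ⟨fun x hx => ⟨hsel_mono x hx, hsup_le x hx⟩, hii, hiii,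
    fun _ => Measure.eq_of_le_of_isProbabilityMeasure (ν := evol w β q pstar 1) hiii⟩
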